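/- arXiv:1605.09491 — 5 statements merged into one kernel-verified Lean document; each statement's English description precedes it below -/
import Mathlib

section
/- If k : [0,∞) → ℝ is continuous and nonnegative, δ ∈ (0, 1/2), the function t ↦ k(t)·t^(1+δ) is monotone increasing on [T,∞) for some T > 0, and t·k(t) → 0 as t → ∞, then t^{-1}·∫₀^t k(s)²·s² ds → 0 as t → ∞. -/
/-! Since `k(s) s^(1+δ) ≤ k(t) t^(1+δ)` for `T ≤ s ≤ t`, the integrand on `[T, t]` is at most
`k(t)² t^(2+2δ) s^(-2δ)`, and `s^(-2δ)` is integrable at `0` because `δ < 1/2`. Hence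
`∫_T^t k² s² ≤ (t k(t))² t / (1 - 2δ)`, so after dividing by `t` only `(t k(t))² / (1 - 2δ)` and
`t⁻¹ ∫_0^T k² s²` remain, and both tend to `0`. -/

open Real MeasureTheory Filter Set intervalIntegral

lemma integral_rpow_le_div {a T t : ℝ} (ha : -1 < a) (hT : 0 ≤ T) :
    ∫ s in T..t, s ^ a ≤ t ^ (a + 1) / (a + 1) := by
  rw [integral_rpow (Or.inl ha)]
  have : 0 ≤ T ^ (a + 1) := rpow_nonneg hT _
  gcongr
  · linarith
  · linarith

lemma sq_mul_sq_le_of_mul_rpow_le {x s M δ : ℝ} (hs : 0 < s) (h0 : 0 ≤ x * s ^ (1 + δ))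
    (h : x * s ^ (1 + δ) ≤ M) : x ^ 2 * s ^ 2 ≤ M ^ 2 * s ^ (-(2 * δ)) := by
  have hs2 : (s ^ (1 + δ)) ^ 2 * s ^ (-(2 * δ)) = s ^ 2 := by
    rw [← rpow_natCast _ 2, ← rpow_mul hs.le, ← rpow_add hs, ← rpow_natCast s 2]
    congr 1
    push_cast
    ring
  calc x ^ 2 * s ^ 2 = (x * s ^ (1 + δ)) ^ 2 * s ^ (-(2 * δ)) := by rw [mul_pow, mul_assoc, hs2]
    _ ≤ M ^ 2 * s ^ (-(2 * δ)) := by gcongr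

lemma integral_sq_mul_sq_le_of_monotoneOn {k : ℝ → ℝ} {δ T t : ℝ}
    (hkc : ContinuousOn k (Icc T t)) (hknn : ∀ s ∈ Icc T t, 0 ≤ k s) (hδ : δ < 1 / 2)
    (hT : 0 < T) (hTt : T ≤ t) (hmono : MonotoneOn (fun s => k s * s ^ (1 + δ)) (Icc T t)) :
    ∫ s in T..t, k s ^ 2 * s ^ 2 ≤ (t * k t) ^ 2 * t / (1 - 2 * δ) := by
  have ht : 0 < t := hT.trans_le hTt
  have htmem : t ∈ Icc T t := ⟨hTt, le_rfl⟩
  set M := k t * t ^ (1 + δ)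
  have hpointwise : ∀ s ∈ Icc T t, k s ^ 2 * s ^ 2 ≤ M ^ 2 * s ^ (-(2 * δ)) := fun s hs =>
    have hs0 : 0 < s := hT.trans_le hs.1
    sq_mul_sq_le_of_mul_rpow_le hs0 (mul_nonneg (hknn s hs) (rpow_nonneg hs0.le _))
      (hmono hs htmem hs.2)
  have hint : IntervalIntegrable (fun s => k s ^ 2 * s ^ 2) volume T t :=
    ((hkc.pow 2).mul (continuousOn_pow 2)).intervalIntegrable_of_Icc hTt
  have hM : M ^ 2 * t ^ (1 - 2 * δ) = (t * k t) ^ 2 * t := by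
    have : (t ^ (1 + δ)) ^ 2 * t ^ (1 - 2 * δ) = t ^ 2 * t := by
      rw [← rpow_natCast _ 2, ← rpow_mul ht.le, ← rpow_add ht, ← rpow_natCast t 2,
        ← rpow_add_one ht.ne']
      congr 1
      push_cast
      ring
    calc M ^ 2 * t ^ (1 - 2 * δ) = k t ^ 2 * ((t ^ (1 + δ)) ^ 2 * t ^ (1 - 2 * δ)) := by ring
      _ = (t * k t) ^ 2 * t := by rw [this]; ring
  calc ∫ s in T..t, k s ^ 2 * s ^ 2 ≤ ∫ s in T..t, M ^ 2 * s ^ (-(2 * δ)) :=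
        integral_mono_on hTt hint
          ((intervalIntegrable_rpow' (by linarith)).const_mul _) hpointwise
    _ = M ^ 2 * ∫ s in T..t, s ^ (-(2 * δ)) := integral_const_mul _ _
    _ ≤ M ^ 2 * (t ^ (-(2 * δ) + 1) / (-(2 * δ) + 1)) := by
        gcongr
        exact integral_rpow_le_div (by linarith) hT.le
    _ = (t * k t) ^ 2 * t / (1 - 2 * δ) := by
        rw [neg_add_eq_sub, ← hM]
        ring

theorem stmt0_general (k : ℝ → ℝ) (δ T : ℝ)
    (hkc : ContinuousOn k (Set.Ici 0))
    (hknn : ∀ t ∈ Set.Ici (0:ℝ), 0 ≤ k t)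
    (hδ1 : δ < 1/2) (hT : 0 < T)
    (hmono : MonotoneOn (fun t => k t * t ^ (1 + δ)) (Set.Ici T))
    (hdecay : Tendsto (fun t => t * k t) atTop (nhds 0)) :
    Tendsto (fun t => t⁻¹ * ∫ s in (0:ℝ)..t, k s ^ 2 * s ^ 2) atTop (nhds 0) := by
  have hint : ∀ a b, 0 ≤ a → a ≤ b → IntervalIntegrable (fun s => k s ^ 2 * s ^ 2) volume a b :=
    fun a b ha hab => ((hkc.mono fun _ hs => ha.trans hs.1).pow 2).mul
      (continuousOn_pow 2) |>.intervalIntegrable_of_Icc hab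
  set C := ∫ s in (0:ℝ)..T, k s ^ 2 * s ^ 2
  have hupper : ∀ᶠ t in atTop, t⁻¹ * ∫ s in (0:ℝ)..t, k s ^ 2 * s ^ 2
      ≤ t⁻¹ * C + (t * k t) ^ 2 / (1 - 2 * δ) := by
    filter_upwards [eventually_ge_atTop T] with t hTt
    have ht : 0 < t := hT.trans_le hTt
    have htail := integral_sq_mul_sq_le_of_monotoneOn (hkc.mono fun s hs => hT.le.trans hs.1)
      (fun s hs => hknn s (hT.le.trans hs.1)) hδ1 hT hTt (hmono.mono Icc_subset_Ici_self)
    rw [← integral_add_adjacent_intervals (hint 0 T le_rfl hT.le) (hint T t hT.le hTt), mul_add]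
    gcongr
    calc t⁻¹ * ∫ s in T..t, k s ^ 2 * s ^ 2 ≤ t⁻¹ * ((t * k t) ^ 2 * t / (1 - 2 * δ)) := by gcongr
      _ = (t * k t) ^ 2 / (1 - 2 * δ) := by field_simp
  have hlim : Tendsto (fun t => t⁻¹ * C + (t * k t) ^ 2 / (1 - 2 * δ)) atTop (nhds 0) := by
    simpa using (tendsto_inv_atTop_zero.mul_const C).add ((hdecay.pow 2).div_const (1 - 2 * δ))
  refine tendsto_of_tendsto_of_tendsto_of_le_of_le' tendsto_const_nhds hlim ?_ hupper
  filter_upwards [eventually_ge_atTop 0] with t ht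
  exact mul_nonneg (inv_nonneg.2 ht) (integral_nonneg ht fun s _ => by positivity)

theorem stmt0 (k : ℝ → ℝ) (δ T : ℝ)
    (hkc : ContinuousOn k (Set.Ici 0))
    (hknn : ∀ t ∈ Set.Ici (0:ℝ), 0 ≤ k t)
    (hδ0 : 0 < δ) (hδ1 : δ < 1/2) (hT : 0 < T)
    (hmono : MonotoneOn (fun t => k t * t ^ (1 + δ)) (Set.Ici T))
    (hdecay : Tendsto (fun t => t * k t) atTop (nhds 0)) :
    Tendsto (fun t => t⁻¹ * ∫ s in (0:ℝ)..t, k s ^ 2 * s ^ 2) atTop (nhds 0) :=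
  stmt0_general k δ T hkc hknn hδ1 hT hmono hdecay
end

section
/- Let B : [0,∞) → ℝ be C² with B(0) = 1, B'(0) = 0, and B'' = k² B where k : [0,∞) → ℝ is continuous. Then for all t ≥ 0, ∫₀^t k(s)² ds ≤ B'(t) ≤ (∫₀^t k(s)² ds) · exp(∫₀^t s·k(s)² ds). -/
/-!
Since `q ≥ 0`, the solution cannot vanish: before a first zero `B'' = q B ≥ 0` forces `B' ≥ 0`
and hence `B ≥ 1`. Then `B' - ∫ q` has derivative `q (B - 1) ≥ 0`, which is the lower bound.
For the upper bound, `1 + t B' - B` has derivative `t q B ≥ 0`, so `B'' = q B ≤ q + t q B'`;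
with `H t = ∫₀ᵗ s q(s) ds` the integrating factor gives `(B' e^{-H})' ≤ q e^{-H} ≤ q`.
-/

open Real Set

theorem Convex.monotoneOn_of_hasDerivWithinAt_nonneg {D : Set ℝ} (hD : Convex ℝ D)
    {f f' : ℝ → ℝ} (hf : ∀ x ∈ D, HasDerivWithinAt f (f' x) D x)
    (hf' : ∀ x ∈ interior D, 0 ≤ f' x) : MonotoneOn f D :=
  _root_.monotoneOn_of_hasDerivWithinAt_nonneg hD (fun x hx => (hf x hx).continuousWithinAt)
    (fun x hx => (hf x (interior_subset hx)).mono interior_subset) hf'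

theorem ContinuousOn.hasDerivWithinAt_integral_Ici {f : ℝ → ℝ} {a t : ℝ}
    (hf : ContinuousOn f (Ici a)) (ht : t ∈ Ici a) :
    HasDerivWithinAt (fun u => ∫ s in a..u, f s) (f t) (Ici a) t := by
  have : Fact (t ∈ Icc a (t + 1)) := ⟨⟨ht, by linarith⟩⟩
  have hIcc : ContinuousOn f (Icc a (t + 1)) := hf.mono Icc_subset_Ici_self
  have hint : IntervalIntegrable f MeasureTheory.volume a t :=
    (hf.mono (uIcc_of_le (show a ≤ t from ht) ▸ Icc_subset_Ici_self)).intervalIntegrable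
  refine (intervalIntegral.integral_hasDerivWithinAt_right (s := Icc a (t + 1)) hint
    (hIcc.stronglyMeasurableAtFilter_nhdsWithin measurableSet_Icc t)
    (hIcc t this.out)).mono_of_mem_nhdsWithin ?_
  exact mem_nhdsWithin.2 ⟨Iio (t + 1), isOpen_Iio, by simp, fun x hx => ⟨hx.2, hx.1.le⟩⟩

/-- For constant `q = k²` the solution is `cosh (k t)`. -/
structure IsCoshSolution (q B B' : ℝ → ℝ) : Prop where
  hasDerivWithinAt : ∀ t ∈ Ici (0 : ℝ), HasDerivWithinAt B (B' t) (Ici 0) t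
  hasDerivWithinAt_deriv : ∀ t ∈ Ici (0 : ℝ), HasDerivWithinAt B' (q t * B t) (Ici 0) t
  apply_zero : B 0 = 1
  deriv_zero : B' 0 = 0

namespace IsCoshSolution

variable {q B B' : ℝ → ℝ}

theorem one_le_of_pos (h : IsCoshSolution q B B') (hq : ∀ t ∈ Ici (0 : ℝ), 0 ≤ q t) {T : ℝ}
    (hpos : ∀ t ∈ Ico 0 T, 0 < B t) {t : ℝ} (ht : t ∈ Icc 0 T) : 1 ≤ B t := by
  have h0 : (0 : ℝ) ∈ Icc 0 T := ⟨le_rfl, ht.1.trans ht.2⟩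
  have hB'mono : MonotoneOn B' (Icc 0 T) :=
    (convex_Icc 0 T).monotoneOn_of_hasDerivWithinAt_nonneg
      (fun x hx => (h.hasDerivWithinAt_deriv x hx.1).mono Icc_subset_Ici_self) fun x hx => by
        rw [interior_Icc] at hx
        exact mul_nonneg (hq x hx.1.le) (hpos x ⟨hx.1.le, hx.2⟩).le
  have hBmono : MonotoneOn B (Icc 0 T) :=
    (convex_Icc 0 T).monotoneOn_of_hasDerivWithinAt_nonneg
      (fun x hx => (h.hasDerivWithinAt x hx.1).mono Icc_subset_Ici_self) fun x hx =>
        h.deriv_zero ▸ hB'mono h0 (interior_subset hx) (interior_subset hx).1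
  exact h.apply_zero ▸ hBmono h0 ht ht.1

theorem pos (h : IsCoshSolution q B B') (hq : ∀ t ∈ Ici (0 : ℝ), 0 ≤ q t) {t : ℝ}
    (ht : 0 ≤ t) : 0 < B t := by
  by_contra! hneg
  set S := {s ∈ Icc 0 t | B s ≤ 0}
  have hSclosed : IsClosed S :=
    ContinuousOn.preimage_isClosed_of_isClosed
      (fun x hx => (h.hasDerivWithinAt x hx.1).continuousWithinAt.mono Icc_subset_Ici_self)
      isClosed_Icc isClosed_Iic
  have hSbdd : BddBelow S := ⟨0, fun _ hs => hs.1.1⟩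
  have hfirst : sInf S ∈ S := hSclosed.csInf_mem ⟨t, ⟨ht, le_rfl⟩, hneg⟩ hSbdd
  have hbefore : ∀ s ∈ Ico 0 (sInf S), 0 < B s := fun s hs => by
    by_contra! hs'
    exact (csInf_le hSbdd ⟨⟨hs.1, hs.2.le.trans hfirst.1.2⟩, hs'⟩).not_gt hs.2
  linarith [hfirst.2, h.one_le_of_pos hq hbefore ⟨hfirst.1.1, le_rfl⟩]

theorem one_le (h : IsCoshSolution q B B') (hq : ∀ t ∈ Ici (0 : ℝ), 0 ≤ q t) {t : ℝ}
    (ht : 0 ≤ t) : 1 ≤ B t :=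
  h.one_le_of_pos hq (fun _ hs => h.pos hq hs.1) ⟨ht, le_rfl⟩

theorem le_one_add_mul_deriv (h : IsCoshSolution q B B') (hq : ∀ t ∈ Ici (0 : ℝ), 0 ≤ q t)
    {t : ℝ} (ht : 0 ≤ t) : B t ≤ 1 + t * B' t := by
  have hmono : MonotoneOn (fun s => 1 + s * B' s - B s) (Ici 0) :=
    (convex_Ici 0).monotoneOn_of_hasDerivWithinAt_nonneg (f' := fun s => s * (q s * B s))
      (fun s hs =>
        ((((hasDerivWithinAt_id s _).mul (h.hasDerivWithinAt_deriv s hs)).const_add 1).sub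
          (h.hasDerivWithinAt s hs)).congr_deriv (by simp))
      fun s hs => mul_nonneg (interior_subset hs) (mul_nonneg (hq s (interior_subset hs))
        (zero_le_one.trans (h.one_le hq (interior_subset hs))))
  have := hmono self_mem_Ici ht ht
  simp only [zero_mul, add_zero, h.apply_zero, sub_self] at this
  linarith

theorem integral_le_deriv (h : IsCoshSolution q B B') (hq : ∀ t ∈ Ici (0 : ℝ), 0 ≤ q t)
    {G : ℝ → ℝ} (hG : ∀ t ∈ Ici (0 : ℝ), HasDerivWithinAt G (q t) (Ici 0) t) (hG0 : G 0 = 0)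
    {t : ℝ} (ht : 0 ≤ t) : G t ≤ B' t := by
  have hmono : MonotoneOn (fun s => B' s - G s) (Ici 0) :=
    (convex_Ici 0).monotoneOn_of_hasDerivWithinAt_nonneg
      (fun s hs => (h.hasDerivWithinAt_deriv s hs).sub (hG s hs)) fun s hs => by
        have := h.one_le hq (interior_subset hs)
        nlinarith [hq s (interior_subset hs)]
  have := hmono self_mem_Ici ht ht
  simp only [h.deriv_zero, hG0, sub_self] at this
  linarith

theorem deriv_le (h : IsCoshSolution q B B') (hq : ∀ t ∈ Ici (0 : ℝ), 0 ≤ q t)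
    {G H : ℝ → ℝ} (hG : ∀ t ∈ Ici (0 : ℝ), HasDerivWithinAt G (q t) (Ici 0) t) (hG0 : G 0 = 0)
    (hH : ∀ t ∈ Ici (0 : ℝ), HasDerivWithinAt H (t * q t) (Ici 0) t) (hH0 : H 0 = 0)
    {t : ℝ} (ht : 0 ≤ t) : B' t ≤ G t * exp (H t) := by
  have hHnonneg : ∀ s ∈ Ici (0 : ℝ), 0 ≤ H s := fun s hs =>
    hH0 ▸ (convex_Ici 0).monotoneOn_of_hasDerivWithinAt_nonneg hH
      (fun x hx => mul_nonneg (interior_subset hx) (hq x (interior_subset hx))) self_mem_Ici hs hs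
  have hmono : MonotoneOn (fun s => G s - B' s * exp (-H s)) (Ici 0) :=
    (convex_Ici 0).monotoneOn_of_hasDerivWithinAt_nonneg
      (f' := fun s => q s * (1 - (B s - s * B' s) * exp (-H s)))
      (fun s hs =>
        ((hG s hs).sub ((h.hasDerivWithinAt_deriv s hs).mul (hH s hs).neg.exp)).congr_deriv
          (by simp only [Pi.neg_apply]; ring))
      fun s hs => by
        have hs' := interior_subset hs
        have hexp : exp (-H s) ≤ 1 := exp_le_one_iff.2 (neg_nonpos.2 (hHnonneg s hs'))
        have := h.le_one_add_mul_deriv hq hs'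
        have : (B s - s * B' s) * exp (-H s) ≤ exp (-H s) :=
          mul_le_of_le_one_left (exp_pos _).le (by linarith)
        exact mul_nonneg (hq s hs') (by linarith)
  have := hmono self_mem_Ici ht ht
  simp only [h.deriv_zero, hG0, zero_mul, sub_self] at this
  calc B' t = B' t * exp (-H t) * exp (H t) := by rw [mul_assoc, ← exp_add]; simp
    _ ≤ G t * exp (H t) := by gcongr; linarith

end IsCoshSolution

theorem stmt2 (B B' k : ℝ → ℝ)
    (hkc : ContinuousOn k (Set.Ici 0))
    (hB : ∀ t ∈ Set.Ici (0:ℝ), HasDerivWithinAt B (B' t) (Set.Ici 0) t)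
    (hB' : ∀ t ∈ Set.Ici (0:ℝ), HasDerivWithinAt B' (k t ^ 2 * B t) (Set.Ici 0) t)
    (hB0 : B 0 = 1) (hB'0 : B' 0 = 0) :
    ∀ t ≥ (0:ℝ),
      (∫ s in (0:ℝ)..t, k s ^ 2) ≤ B' t ∧
      B' t ≤ (∫ s in (0:ℝ)..t, k s ^ 2) * Real.exp (∫ s in (0:ℝ)..t, s * k s ^ 2) := by
  intro t ht
  have h : IsCoshSolution (fun s => k s ^ 2) B B' := ⟨hB, hB', hB0, hB'0⟩
  have hq : ∀ s ∈ Ici (0 : ℝ), 0 ≤ k s ^ 2 := fun s _ => sq_nonneg _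
  have hG := fun s (hs : s ∈ Ici (0 : ℝ)) => (hkc.pow 2).hasDerivWithinAt_integral_Ici hs
  have hH := fun s (hs : s ∈ Ici (0 : ℝ)) =>
    (continuousOn_id.mul (hkc.pow 2)).hasDerivWithinAt_integral_Ici hs
  exact ⟨h.integral_le_deriv hq hG intervalIntegral.integral_same ht,
    h.deriv_le hq hG intervalIntegral.integral_same hH intervalIntegral.integral_same ht⟩
end

section
/- Let B : [0,∞) → ℝ be C² with B(0) = 1, B'(0) = 0, B'' = k² B, where k is continuous, nonnegative, and satisfies ∫₀^∞ s·k(s)² ds < ∞ and ∫₀^∞ k(s)² ds > 0. Then there exist positive constants C₁, C₂ and T₀ such that C₁ t ≤ B(t) ≤ C₂ t for all t ≥ T₀. -/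
/-!
Since `(B B')' = B'² + k² B² ≥ 0` and `B B'` vanishes at `0`, `B²` is nondecreasing, so `B ≥ 1`
and `B'` is nondecreasing and nonnegative. Then `B'(t) = ∫₀ᵗ k² B ≥ ∫₀ᵗ k²` is eventually at least
half of `∫₀^∞ k² > 0`. Conversely `B(s) ≤ 1 + s B'(t)` for `s ≤ t`, so
`B'(t) - B'(T) ≤ ∫_T^t k² + B'(t) ∫_T^t s k²`; choosing `T` with `∫_T^∞ s k² ≤ 1/2` bounds `B'`.
Two-sided bounds on `B'` give linear bounds on `B`.
-/

open MeasureTheory Filter Set intervalIntegral Topology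

section DerivativeComparison

variable {f f' : ℝ → ℝ} {a : ℝ}

theorem monotoneOn_of_hasDerivWithinAt_Ici_nonneg {D : Set ℝ} (hD : Convex ℝ D)
    (hDa : D ⊆ Ici a) (hf : ∀ t ∈ Ici a, HasDerivWithinAt f (f' t) (Ici a) t)
    (hf' : ∀ t ∈ D, 0 ≤ f' t) : MonotoneOn f D :=
  monotoneOn_of_hasDerivWithinAt_nonneg hD
    (fun t ht => (hf t (hDa ht)).continuousWithinAt.mono hDa)
    (fun t ht => (hf t (hDa (interior_subset ht))).mono (interior_subset.trans hDa))
    (fun t ht => hf' t (interior_subset ht))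

theorem image_sub_le_mul_sub_of_hasDerivWithinAt_le {C x y : ℝ}
    (hf : ∀ t ∈ Ici a, HasDerivWithinAt f (f' t) (Ici a) t) (hax : a ≤ x) (hxy : x ≤ y)
    (hC : ∀ t ∈ Icc x y, f' t ≤ C) : f y - f x ≤ C * (y - x) := by
  have hg (t) (ht : t ∈ Ici a) :
      HasDerivWithinAt (fun t => C * t - f t) (C - f' t) (Ici a) t := by
    simpa using ((hasDerivWithinAt_id t _).const_mul C).fun_sub (hf t ht)
  have := monotoneOn_of_hasDerivWithinAt_Ici_nonneg (convex_Icc x y)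
    (Icc_subset_Ici_iff hxy |>.2 hax) hg (fun t ht => sub_nonneg.2 (hC t ht))
    (left_mem_Icc.2 hxy) (right_mem_Icc.2 hxy) hxy
  linear_combination this

theorem mul_sub_le_image_sub_of_le_hasDerivWithinAt {C x y : ℝ}
    (hf : ∀ t ∈ Ici a, HasDerivWithinAt f (f' t) (Ici a) t) (hax : a ≤ x) (hxy : x ≤ y)
    (hC : ∀ t ∈ Icc x y, C ≤ f' t) : C * (y - x) ≤ f y - f x := by
  have hg (t) (ht : t ∈ Ici a) :
      HasDerivWithinAt (fun t => f t - C * t) (f' t - C) (Ici a) t := by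
    simpa using (hf t ht).fun_sub ((hasDerivWithinAt_id t _).const_mul C)
  have := monotoneOn_of_hasDerivWithinAt_Ici_nonneg (convex_Icc x y)
    (Icc_subset_Ici_iff hxy |>.2 hax) hg (fun t ht => sub_nonneg.2 (hC t ht))
    (left_mem_Icc.2 hxy) (right_mem_Icc.2 hxy) hxy
  linear_combination this

theorem eventually_mul_le_of_eventually_le_deriv {c : ℝ}
    (hf : ∀ t ∈ Ici a, HasDerivWithinAt f (f' t) (Ici a) t) (hc : 0 < c)
    (h : ∀ᶠ t in atTop, c ≤ f' t) : ∀ᶠ t in atTop, c / 2 * t ≤ f t := by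
  obtain ⟨T, hT⟩ := eventually_atTop.1 (h.and (eventually_ge_atTop a))
  filter_upwards [eventually_ge_atTop T,
    (tendsto_id.const_mul_atTop (half_pos hc)).eventually_ge_atTop (c * T - f T)] with t ht hct
  have := mul_sub_le_image_sub_of_le_hasDerivWithinAt hf (hT T le_rfl).2 ht
    (fun s hs => (hT s hs.1).1)
  simp only [id] at hct
  linarith

theorem eventually_le_mul_of_eventually_deriv_le {C : ℝ}
    (hf : ∀ t ∈ Ici a, HasDerivWithinAt f (f' t) (Ici a) t) (hC : 0 < C)
    (h : ∀ᶠ t in atTop, f' t ≤ C) : ∀ᶠ t in atTop, f t ≤ 2 * C * t := by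
  obtain ⟨T, hT⟩ := eventually_atTop.1 (h.and (eventually_ge_atTop a))
  filter_upwards [eventually_ge_atTop T,
    (tendsto_id.const_mul_atTop hC).eventually_ge_atTop (f T - C * T)] with t ht hCt
  have := image_sub_le_mul_sub_of_hasDerivWithinAt_le hf (hT T le_rfl).2 ht
    (fun s hs => (hT s hs.1).1)
  simp only [id] at hCt
  linarith

theorem integral_eq_sub_of_hasDerivWithinAt_Ici {x y : ℝ}
    (hf : ∀ t ∈ Ici a, HasDerivWithinAt f (f' t) (Ici a) t) (hax : a ≤ x) (hxy : x ≤ y)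
    (hint : IntervalIntegrable f' volume x y) : ∫ t in x..y, f' t = f y - f x :=
  integral_eq_sub_of_hasDeriv_right_of_le hxy
    (fun t ht => (hf t (hax.trans ht.1)).continuousWithinAt.mono
      (Icc_subset_Ici_iff hxy |>.2 hax))
    (fun t ht => (hf t (hax.trans ht.1.le)).mono (Ioi_subset_Ici (hax.trans ht.1.le)))
    hint

end DerivativeComparison

section ImproperIntegral

variable {g : ℝ → ℝ} {a : ℝ}

theorem MeasureTheory.IntegrableOn.intervalIntegrable_of_Ici (hg : IntegrableOn g (Ici a))
    {x y : ℝ} (hax : a ≤ x) (hxy : x ≤ y) : IntervalIntegrable g volume x y :=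
  (intervalIntegrable_iff_integrableOn_Icc_of_le hxy).2
    (hg.mono_set (Icc_subset_Ici_iff hxy |>.2 hax))

theorem tendsto_intervalIntegral_integral_Ici (hg : IntegrableOn g (Ici a)) :
    Tendsto (fun t => ∫ x in a..t, g x) atTop (𝓝 (∫ x in Ici a, g x)) := by
  rw [integral_Ici_eq_integral_Ioi]
  exact intervalIntegral_tendsto_integral_Ioi a (hg.mono_set Ioi_subset_Ici_self) tendsto_id

theorem intervalIntegral_le_integral_Ici (hg : IntegrableOn g (Ici a))
    (hnn : ∀ s ∈ Ici a, 0 ≤ g s) {x y : ℝ} (hax : a ≤ x) (hxy : x ≤ y) :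
    ∫ s in x..y, g s ≤ ∫ s in Ici a, g s := by
  rw [integral_of_le hxy]
  exact setIntegral_mono_set hg ((ae_restrict_iff' measurableSet_Ici).2 (ae_of_all _ hnn))
    (LE.le.eventuallyLE fun s hs => hax.trans hs.1.le)

theorem eventually_forall_intervalIntegral_le (hg : IntegrableOn g (Ici a))
    (hnn : ∀ s ∈ Ici a, 0 ≤ g s) {ε : ℝ} (hε : 0 < ε) :
    ∀ᶠ T in atTop, a ≤ T ∧ ∀ t ≥ T, ∫ s in T..t, g s ≤ ε := by
  filter_upwards [eventually_ge_atTop a, (tendsto_intervalIntegral_integral_Ici hg).eventually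
    (eventually_gt_nhds (sub_lt_self _ hε))] with T haT hT
  refine ⟨haT, fun t ht => ?_⟩
  rw [← integral_interval_sub_left (hg.intervalIntegrable_of_Ici le_rfl (haT.trans ht))
    (hg.intervalIntegrable_of_Ici le_rfl haT)]
  linarith [intervalIntegral_le_integral_Ici hg hnn le_rfl (haT.trans ht)]

end ImproperIntegral

structure IsJacobiSolution (B B' k : ℝ → ℝ) : Prop where
  hasDerivWithinAt_B : ∀ t ∈ Ici (0:ℝ), HasDerivWithinAt B (B' t) (Ici 0) t
  hasDerivWithinAt_B' : ∀ t ∈ Ici (0:ℝ), HasDerivWithinAt B' (k t ^ 2 * B t) (Ici 0) t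
  B_zero : B 0 = 1
  B'_zero : B' 0 = 0

namespace IsJacobiSolution

variable {B B' k : ℝ → ℝ} {s t : ℝ}

theorem continuousOn (h : IsJacobiSolution B B' k) : ContinuousOn B (Ici 0) :=
  fun t ht => (h.hasDerivWithinAt_B t ht).continuousWithinAt

theorem one_le_sq (h : IsJacobiSolution B B' k) (ht : 0 ≤ t) : 1 ≤ B t ^ 2 := by
  have hBB' : MonotoneOn (fun t => B t * B' t) (Ici 0) :=
    monotoneOn_of_hasDerivWithinAt_Ici_nonneg (convex_Ici 0) subset_rfl
      (fun t ht => (h.hasDerivWithinAt_B t ht).mul (h.hasDerivWithinAt_B' t ht))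
      (fun t _ => by nlinarith [mul_self_nonneg (B' t), mul_self_nonneg (k t * B t)])
  have hB2 : MonotoneOn (fun t => B t ^ 2) (Ici 0) :=
    monotoneOn_of_hasDerivWithinAt_Ici_nonneg (convex_Ici 0) subset_rfl
      (fun t ht => (h.hasDerivWithinAt_B t ht).pow 2)
      (fun t ht => by
        have := hBB' self_mem_Ici ht ht
        simp only [h.B_zero, h.B'_zero, mul_zero] at this
        norm_num
        linarith)
  simpa [h.B_zero] using hB2 self_mem_Ici ht ht

theorem one_le (h : IsJacobiSolution B B' k) (ht : 0 ≤ t) : 1 ≤ B t := by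
  have hpos : 0 < B t := by
    by_contra! hneg
    obtain ⟨s, hs, hs0⟩ := isPreconnected_Ici.intermediate_value ht self_mem_Ici h.continuousOn
      ⟨hneg, by simp [h.B_zero]⟩
    have := h.one_le_sq hs
    norm_num [hs0] at this
  nlinarith [h.one_le_sq ht]

theorem monotoneOn_B' (h : IsJacobiSolution B B' k) : MonotoneOn B' (Ici 0) :=
  monotoneOn_of_hasDerivWithinAt_Ici_nonneg (convex_Ici 0) subset_rfl h.hasDerivWithinAt_B'
    (fun _ ht => mul_nonneg (sq_nonneg _) (zero_le_one.trans (h.one_le ht)))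

theorem B'_nonneg (h : IsJacobiSolution B B' k) (ht : 0 ≤ t) : 0 ≤ B' t :=
  h.B'_zero ▸ h.monotoneOn_B' self_mem_Ici ht ht

theorem le_one_add_mul_B' (h : IsJacobiSolution B B' k) (hs : 0 ≤ s) (hst : s ≤ t) :
    B s ≤ 1 + s * B' t := by
  have := image_sub_le_mul_sub_of_hasDerivWithinAt_le h.hasDerivWithinAt_B le_rfl hs
    (fun u hu => h.monotoneOn_B' hu.1 hs hu.2)
  rw [h.B_zero, sub_zero] at this
  nlinarith [h.monotoneOn_B' hs (hs.trans hst) hst]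

theorem intervalIntegrable_sq_mul (h : IsJacobiSolution B B' k)
    (hk : IntegrableOn (fun s => k s ^ 2) (Ici 0)) (hs : 0 ≤ s) (hst : s ≤ t) :
    IntervalIntegrable (fun u => k u ^ 2 * B u) volume s t :=
  (intervalIntegrable_iff_integrableOn_Icc_of_le hst).2 <|
    (hk.mono_set (Icc_subset_Ici_iff hst |>.2 hs)).mul_continuousOn
      (h.continuousOn.mono (Icc_subset_Ici_iff hst |>.2 hs)) isCompact_Icc

theorem B'_sub_B'_eq_integral (h : IsJacobiSolution B B' k)
    (hk : IntegrableOn (fun s => k s ^ 2) (Ici 0)) (hs : 0 ≤ s) (hst : s ≤ t) :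
    B' t - B' s = ∫ u in s..t, k u ^ 2 * B u :=
  (integral_eq_sub_of_hasDerivWithinAt_Ici h.hasDerivWithinAt_B' hs hst
    (h.intervalIntegrable_sq_mul hk hs hst)).symm

theorem eventually_le_B' (h : IsJacobiSolution B B' k)
    (hk : IntegrableOn (fun s => k s ^ 2) (Ici 0)) (hpos : 0 < ∫ s in Ici (0:ℝ), k s ^ 2) :
    ∀ᶠ t in atTop, (∫ s in Ici (0:ℝ), k s ^ 2) / 2 ≤ B' t := by
  filter_upwards [eventually_ge_atTop 0, (tendsto_intervalIntegral_integral_Ici hk).eventually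
    (eventually_gt_nhds (half_lt_self hpos))] with t ht hlarge
  have : ∫ s in (0:ℝ)..t, k s ^ 2 ≤ ∫ s in (0:ℝ)..t, k s ^ 2 * B s :=
    integral_mono_on ht (hk.intervalIntegrable_of_Ici le_rfl ht)
      (h.intervalIntegrable_sq_mul hk le_rfl ht)
      (fun s hs => le_mul_of_one_le_right (sq_nonneg _) (h.one_le hs.1))
  linarith [h.B'_sub_B'_eq_integral hk le_rfl ht, h.B'_zero]

theorem exists_pos_eventually_B'_le (h : IsJacobiSolution B B' k)
    (hsk : IntegrableOn (fun s => s * k s ^ 2) (Ici 0))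
    (hk : IntegrableOn (fun s => k s ^ 2) (Ici 0)) (hpos : 0 < ∫ s in Ici (0:ℝ), k s ^ 2) :
    ∃ M > 0, ∀ᶠ t in atTop, B' t ≤ M := by
  obtain ⟨T, hT0, hT⟩ := (eventually_forall_intervalIntegral_le hsk
    (fun s hs => mul_nonneg hs (sq_nonneg _)) (half_pos one_pos)).exists
  refine ⟨2 * (B' T + ∫ s in Ici (0:ℝ), k s ^ 2), by linarith [h.B'_nonneg hT0], ?_⟩
  filter_upwards [eventually_ge_atTop T] with t ht
  -- `B'(t)` absorbs half of itself, since `∫_T^t s k² ≤ 1/2`.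
  have hpt (s) (hs : s ∈ Icc T t) : k s ^ 2 * B s ≤ k s ^ 2 + B' t * (s * k s ^ 2) := by
    have := mul_le_mul_of_nonneg_left (h.le_one_add_mul_B' (hT0.trans hs.1) hs.2)
      (sq_nonneg (k s))
    linarith
  have hk_int := hk.intervalIntegrable_of_Ici hT0 ht
  have hsk_int := (hsk.intervalIntegrable_of_Ici hT0 ht).const_mul (B' t)
  have := integral_mono_on ht (h.intervalIntegrable_sq_mul hk hT0 ht) (hk_int.add hsk_int) hpt
  rw [integral_add hk_int hsk_int, intervalIntegral.integral_const_mul,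
    ← h.B'_sub_B'_eq_integral hk hT0 ht] at this
  nlinarith [intervalIntegral_le_integral_Ici hk (fun s _ => sq_nonneg (k s)) hT0 ht, hT t ht,
    h.B'_nonneg (hT0.trans ht)]

end IsJacobiSolution

theorem stmt3_general (B B' k : ℝ → ℝ)
    (hB : ∀ t ∈ Set.Ici (0:ℝ), HasDerivWithinAt B (B' t) (Set.Ici 0) t)
    (hB' : ∀ t ∈ Set.Ici (0:ℝ), HasDerivWithinAt B' (k t ^ 2 * B t) (Set.Ici 0) t)
    (hB0 : B 0 = 1) (hB'0 : B' 0 = 0)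
    (hint1 : MeasureTheory.IntegrableOn (fun s => s * k s ^ 2) (Set.Ici 0))
    (hint2 : MeasureTheory.IntegrableOn (fun s => k s ^ 2) (Set.Ici 0))
    (hpos : 0 < ∫ s in Set.Ici (0:ℝ), k s ^ 2) :
    ∃ C₁ C₂ T₀ : ℝ, 0 < C₁ ∧ 0 < C₂ ∧ 0 < T₀ ∧
      ∀ t ≥ T₀, C₁ * t ≤ B t ∧ B t ≤ C₂ * t := by
  have hJ : IsJacobiSolution B B' k := ⟨hB, hB', hB0, hB'0⟩
  obtain ⟨M, hM, hB'M⟩ := hJ.exists_pos_eventually_B'_le hint1 hint2 hpos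
  have hlower := eventually_mul_le_of_eventually_le_deriv hB (half_pos hpos)
    (hJ.eventually_le_B' hint2 hpos)
  have hupper := eventually_le_mul_of_eventually_deriv_le hB hM hB'M
  obtain ⟨T, hT⟩ := eventually_atTop.1 (hlower.and hupper)
  exact ⟨_, 2 * M, max T 1, by positivity, by positivity, by positivity,
    fun t ht => hT t (le_of_max_le_left ht)⟩

theorem stmt3 (B B' k : ℝ → ℝ)
    (hkc : ContinuousOn k (Set.Ici 0))
    (hknn : ∀ t ∈ Set.Ici (0:ℝ), 0 ≤ k t)
    (hB : ∀ t ∈ Set.Ici (0:ℝ), HasDerivWithinAt B (B' t) (Set.Ici 0) t)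
    (hB' : ∀ t ∈ Set.Ici (0:ℝ), HasDerivWithinAt B' (k t ^ 2 * B t) (Set.Ici 0) t)
    (hB0 : B 0 = 1) (hB'0 : B' 0 = 0)
    (hint1 : MeasureTheory.IntegrableOn (fun s => s * k s ^ 2) (Set.Ici 0))
    (hint2 : MeasureTheory.IntegrableOn (fun s => k s ^ 2) (Set.Ici 0))
    (hpos : 0 < ∫ s in Set.Ici (0:ℝ), k s ^ 2) :
    ∃ C₁ C₂ T₀ : ℝ, 0 < C₁ ∧ 0 < C₂ ∧ 0 < T₀ ∧
      ∀ t ≥ T₀, C₁ * t ≤ B t ∧ B t ≤ C₂ * t :=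
  stmt3_general B B' k hB hB' hB0 hB'0 hint1 hint2 hpos
end

section
/- Let B : [0,∞) → ℝ be C² with B(0) = 1, B'(0) = 0, B'' = k² B, where k is continuous nonnegative with ∫₀^∞ s k(s)² ds < ∞ and ∫₀^∞ k(s)² ds > 0, and suppose t^{-1}∫₀^t B(s) k(s)² s ds → 0 as t → ∞. Then B'(t)/B(t) = 1/t + o(1/t) as t → ∞. -/
open Real MeasureTheory Filter Set intervalIntegral
open scoped Topology

/-!
From `B'' = k² B` and `B(0) = 1`, `B'(0) = 0`, looking at the first zero of `B` shows `B ≥ 1` and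
`B' ≥ 0` on `[0, ∞)`; in particular `B'` is nondecreasing and `B(t) ≤ 1 + t B'(t)`. Hence
`(log (1 + B'))' = k² B / (1 + B') ≤ (1 + t) k²`, which is integrable, so `B'` is bounded and
converges to some `L`; and `L ≥ ∫ k² B ≥ ∫ k² > 0`. Then `B(t)/t → L` as well, so
`t B'/B = B' / (B/t) → L / L = 1`.
-/

lemma monotoneOn_of_hasDerivWithinAt_nonneg_of_subset {f f' : ℝ → ℝ} {s D : Set ℝ}
    (hf : ∀ t ∈ s, HasDerivWithinAt f (f' t) s t) (hD : Convex ℝ D) (hDs : D ⊆ s)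
    (hf' : ∀ t ∈ interior D, 0 ≤ f' t) : MonotoneOn f D :=
  monotoneOn_of_hasDerivWithinAt_nonneg hD
    (fun t ht => (hf t (hDs ht)).continuousWithinAt.mono hDs)
    (fun t ht => (hf t (hDs (interior_subset ht))).mono (interior_subset.trans hDs)) hf'

lemma integral_eq_sub_of_hasDerivWithinAt_Ici_s5 {f f' : ℝ → ℝ} {c a b : ℝ}
    (hf : ∀ t ∈ Ici c, HasDerivWithinAt f (f' t) (Ici c) t) (hf' : ContinuousOn f' (Ici c))
    (ha : c ≤ a) (hab : a ≤ b) : ∫ s in a..b, f' s = f b - f a := by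
  have hsub : Icc a b ⊆ Ici c := fun x hx => ha.trans hx.1
  refine integral_eq_sub_of_hasDeriv_right_of_le hab
    (fun t ht => (hf t (hsub ht)).continuousWithinAt.mono hsub) (fun t ht => ?_)
    ((hf'.mono hsub).intervalIntegrable_of_Icc hab)
  exact (hf t (hsub (Ioo_subset_Icc_self ht))).mono fun x hx => (ha.trans ht.1.le).trans hx.le

lemma intervalIntegral_le_integral_Ioi {g : ℝ → ℝ} {a t : ℝ} (hg : IntegrableOn g (Ioi a))
    (hg₀ : ∀ s ∈ Ioi a, 0 ≤ g s) (ht : a ≤ t) : ∫ s in a..t, g s ≤ ∫ s in Ioi a, g s := by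
  rw [integral_of_le ht]
  exact setIntegral_mono_set hg ((ae_restrict_mem measurableSet_Ioi).mono hg₀)
    Ioc_subset_Ioi_self.eventuallyLE

lemma tendsto_div_self_of_tendsto_deriv {f f' : ℝ → ℝ} {L : ℝ}
    (hf : ∀ᶠ t in atTop, HasDerivAt f (f' t) t) (hf' : Tendsto f' atTop (𝓝 L)) :
    Tendsto (fun t => f t / t) atTop (𝓝 L) := by
  rw [Metric.tendsto_atTop]
  intro ε hε
  obtain ⟨T, hT⟩ := eventually_atTop.1 <| (hf.and (eventually_ge_atTop 0)).and
    (hf'.eventually (Metric.closedBall_mem_nhds L (half_pos hε)))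
  set g := fun x => f x - x * L
  have hg : ∀ t, T ≤ t → |g t - g T| ≤ ε / 2 * (t - T) := fun t ht =>
    norm_image_sub_le_of_norm_deriv_le_segment' (f' := fun x => f' x - L)
      (fun x hx => ((hT x hx.1).1.1.sub (hasDerivAt_mul_const L)).hasDerivWithinAt)
      (fun x hx => (hT x hx.1).2) t ⟨ht, le_rfl⟩
  refine ⟨max T (2 * |g T| / ε + 1), fun t ht => ?_⟩
  have hTt : T ≤ t := le_of_max_le_left ht
  have hT₀ : 0 ≤ T := (hT T le_rfl).1.2
  have hgT : 2 * |g T| < ε * t := by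
    have : 2 * |g T| / ε < t := by linarith [le_of_max_le_right ht]
    rw [div_lt_iff₀ hε] at this
    linarith
  have ht₀ : 0 < t := by nlinarith [abs_nonneg (g T)]
  have hgt : |g t| < ε * t := by
    nlinarith [hg t hTt, abs_sub_abs_le_abs_sub (g t) (g T)]
  rw [Real.dist_eq, show f t / t - L = g t / t by simp only [g]; field_simp, abs_div,
    abs_of_pos ht₀, div_lt_iff₀ ht₀]
  exact hgt

structure IsIVPSolution (q B B' : ℝ → ℝ) : Prop where
  hasDerivWithinAt : ∀ t ∈ Ici (0 : ℝ), HasDerivWithinAt B (B' t) (Ici 0) t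
  hasDerivWithinAt_deriv : ∀ t ∈ Ici (0 : ℝ), HasDerivWithinAt B' (q t * B t) (Ici 0) t
  apply_zero : B 0 = 1
  deriv_zero : B' 0 = 0

namespace IsIVPSolution

variable {q B B' : ℝ → ℝ}

lemma continuousOn (h : IsIVPSolution q B B') : ContinuousOn B (Ici 0) :=
  fun t ht => (h.hasDerivWithinAt t ht).continuousWithinAt

lemma continuousOn_deriv (h : IsIVPSolution q B B') : ContinuousOn B' (Ici 0) :=
  fun t ht => (h.hasDerivWithinAt_deriv t ht).continuousWithinAt

lemma hasDerivAt (h : IsIVPSolution q B B') {t : ℝ} (ht : 0 < t) : HasDerivAt B (B' t) t :=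
  (h.hasDerivWithinAt t ht.le).hasDerivAt (Ici_mem_nhds ht)

lemma deriv_nonneg_and_one_le_of_nonneg_on_Ioo (h : IsIVPSolution q B B')
    (hq : ∀ t ∈ Ici (0 : ℝ), 0 ≤ q t) {T : ℝ} (hBT : ∀ t ∈ Ioo 0 T, 0 ≤ B t) :
    ∀ t ∈ Icc 0 T, 0 ≤ B' t ∧ 1 ≤ B t := by
  have hB'_mono : MonotoneOn B' (Icc 0 T) :=
    monotoneOn_of_hasDerivWithinAt_nonneg_of_subset h.hasDerivWithinAt_deriv (convex_Icc 0 T)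
      Icc_subset_Ici_self fun t ht => by
        rw [interior_Icc] at ht
        exact mul_nonneg (hq t ht.1.le) (hBT t ht)
  have hB'_nonneg : ∀ t ∈ Icc 0 T, 0 ≤ B' t := fun t ht =>
    h.deriv_zero ▸ hB'_mono ⟨le_rfl, ht.1.trans ht.2⟩ ht ht.1
  have hB_mono : MonotoneOn B (Icc 0 T) :=
    monotoneOn_of_hasDerivWithinAt_nonneg_of_subset h.hasDerivWithinAt (convex_Icc 0 T)
      Icc_subset_Ici_self fun t ht => by
        rw [interior_Icc] at ht
        exact hB'_nonneg t (Ioo_subset_Icc_self ht)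
  exact fun t ht => ⟨hB'_nonneg t ht, h.apply_zero ▸ hB_mono ⟨le_rfl, ht.1.trans ht.2⟩ ht ht.1⟩

lemma pos (h : IsIVPSolution q B B') (hq : ∀ t ∈ Ici (0 : ℝ), 0 ≤ q t) :
    ∀ t ∈ Ici (0 : ℝ), 0 < B t := by
  by_contra! ⟨w, hw, hBw⟩
  set A := Ici 0 ∩ B ⁻¹' Iic 0
  have hA_bdd : BddBelow A := ⟨0, fun x hx => hx.1⟩
  have hA_mem : sInf A ∈ A :=
    (h.continuousOn.preimage_isClosed_of_isClosed isClosed_Ici isClosed_Iic).csInf_mem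
      ⟨w, hw, hBw⟩ hA_bdd
  have hB_nonneg : ∀ t ∈ Ioo 0 (sInf A), 0 ≤ B t := fun t ht => by
    by_contra! hBt
    exact (csInf_le hA_bdd ⟨ht.1.le, hBt.le⟩).not_gt ht.2
  have := (h.deriv_nonneg_and_one_le_of_nonneg_on_Ioo hq hB_nonneg _ ⟨hA_mem.1, le_rfl⟩).2
  linarith [show B (sInf A) ≤ 0 from hA_mem.2]

lemma deriv_nonneg (h : IsIVPSolution q B B') (hq : ∀ t ∈ Ici (0 : ℝ), 0 ≤ q t) {t : ℝ}
    (ht : 0 ≤ t) : 0 ≤ B' t :=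
  (h.deriv_nonneg_and_one_le_of_nonneg_on_Ioo hq (T := t)
    (fun s hs => (h.pos hq s hs.1.le).le) t ⟨ht, le_rfl⟩).1

lemma one_le (h : IsIVPSolution q B B') (hq : ∀ t ∈ Ici (0 : ℝ), 0 ≤ q t) {t : ℝ}
    (ht : 0 ≤ t) : 1 ≤ B t :=
  (h.deriv_nonneg_and_one_le_of_nonneg_on_Ioo hq (T := t)
    (fun s hs => (h.pos hq s hs.1.le).le) t ⟨ht, le_rfl⟩).2

lemma monotoneOn_deriv (h : IsIVPSolution q B B') (hq : ∀ t ∈ Ici (0 : ℝ), 0 ≤ q t) :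
    MonotoneOn B' (Ici 0) :=
  monotoneOn_of_hasDerivWithinAt_nonneg_of_subset h.hasDerivWithinAt_deriv (convex_Ici 0)
    subset_rfl fun t ht => by
      rw [interior_Ici, mem_Ioi] at ht
      exact mul_nonneg (hq t ht.le) (h.pos hq t ht.le).le

lemma le_one_add_mul_deriv (h : IsIVPSolution q B B') (hq : ∀ t ∈ Ici (0 : ℝ), 0 ≤ q t)
    {t : ℝ} (ht : 0 ≤ t) : B t ≤ 1 + t * B' t := by
  have hmono : MonotoneOn (fun s => s * B' s - B s) (Ici 0) :=
    monotoneOn_of_hasDerivWithinAt_nonneg_of_subset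
      (fun s hs => ((hasDerivWithinAt_id s _).mul (h.hasDerivWithinAt_deriv s hs)).sub
        (h.hasDerivWithinAt s hs)) (convex_Ici 0) subset_rfl fun s hs => by
      rw [interior_Ici, mem_Ioi] at hs
      have := mul_nonneg hs.le (mul_nonneg (hq s hs.le) (h.pos hq s hs.le).le)
      simp only [id, one_mul]
      linarith
  have := hmono self_mem_Ici ht ht
  simp only [zero_mul, h.apply_zero] at this
  linarith

lemma integral_mul_eq_deriv (h : IsIVPSolution q B B') (hqc : ContinuousOn q (Ici 0)) {t : ℝ}
    (ht : 0 ≤ t) : ∫ s in 0..t, q s * B s = B' t := by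
  rw [integral_eq_sub_of_hasDerivWithinAt_Ici_s5 h.hasDerivWithinAt_deriv
    (hqc.mul h.continuousOn) le_rfl ht, h.deriv_zero, sub_zero]

lemma deriv_le_exp_integral (h : IsIVPSolution q B B') (hqc : ContinuousOn q (Ici 0))
    (hq : ∀ t ∈ Ici (0 : ℝ), 0 ≤ q t) (hq_int : IntegrableOn q (Ioi 0))
    (hq_int' : IntegrableOn (fun s => s * q s) (Ioi 0)) {t : ℝ} (ht : 0 ≤ t) :
    B' t ≤ exp (∫ s in Ioi 0, (1 + s) * q s) - 1 := by
  have hpos : ∀ s ∈ Ici (0 : ℝ), 1 + B' s ≠ 0 := fun s hs => by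
    linarith [h.deriv_nonneg hq hs]
  have hsub : Icc 0 t ⊆ Ici 0 := Icc_subset_Ici_self
  have hFTC : ∫ s in 0..t, q s * B s / (1 + B' s) = log (1 + B' t) := by
    rw [integral_eq_sub_of_hasDerivWithinAt_Ici_s5 (f := fun s => log (1 + B' s))
      (fun s hs => ((h.hasDerivWithinAt_deriv s hs).const_add 1).log (hpos s hs))
      ((hqc.mul h.continuousOn).div (continuousOn_const.add h.continuousOn_deriv) hpos)
      le_rfl ht, h.deriv_zero, add_zero, log_one, sub_zero]
  have hbound : ∫ s in 0..t, q s * B s / (1 + B' s) ≤ ∫ s in 0..t, (1 + s) * q s := by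
    refine integral_mono_on ht ?_ ?_ fun s hs => ?_
    · exact (((hqc.mul h.continuousOn).div (continuousOn_const.add h.continuousOn_deriv)
        hpos).mono hsub).intervalIntegrable_of_Icc ht
    · exact (((continuousOn_const.add continuousOn_id).mul hqc).mono hsub).intervalIntegrable_of_Icc
        ht
    · have hB' := h.deriv_nonneg hq hs.1
      have hB : B s ≤ (1 + s) * (1 + B' s) := by
        nlinarith [h.le_one_add_mul_deriv hq hs.1, hs.1]
      rw [div_le_iff₀ (by linarith)]
      calc q s * B s ≤ q s * ((1 + s) * (1 + B' s)) := mul_le_mul_of_nonneg_left hB (hq s hs.1)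
        _ = (1 + s) * q s * (1 + B' s) := by ring
  have hint : IntegrableOn (fun s => (1 + s) * q s) (Ioi 0) :=
    (hq_int.add hq_int').congr_fun (fun s _ => by simp only [Pi.add_apply]; ring) measurableSet_Ioi
  have hlog : log (1 + B' t) ≤ ∫ s in Ioi 0, (1 + s) * q s :=
    hFTC ▸ hbound.trans (intervalIntegral_le_integral_Ioi hint
      (fun s hs => mul_nonneg (by linarith [mem_Ioi.1 hs]) (hq s (mem_Ici_of_Ioi hs))) ht)
  linarith [(log_le_iff_le_exp (by linarith [h.deriv_nonneg hq ht])).1 hlog]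

lemma exists_tendsto_deriv (h : IsIVPSolution q B B') (hqc : ContinuousOn q (Ici 0))
    (hq : ∀ t ∈ Ici (0 : ℝ), 0 ≤ q t) (hq_int : IntegrableOn q (Ioi 0))
    (hq_int' : IntegrableOn (fun s => s * q s) (Ioi 0)) : ∃ L, Tendsto B' atTop (𝓝 L) := by
  have hmono : Monotone fun t => B' (max t 0) := fun a b hab =>
    h.monotoneOn_deriv hq (le_max_right a 0) (le_max_right b 0) (max_le_max_right 0 hab)
  have hbdd : BddAbove (range fun t => B' (max t 0)) := ⟨_, by
    rintro _ ⟨t, rfl⟩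
    exact h.deriv_le_exp_integral hqc hq hq_int hq_int' (le_max_right t 0)⟩
  refine ⟨_, (tendsto_atTop_ciSup hmono hbdd).congr' ?_⟩
  filter_upwards [eventually_ge_atTop 0] with t ht
  rw [max_eq_left ht]

lemma integral_le_of_tendsto_deriv (h : IsIVPSolution q B B') (hqc : ContinuousOn q (Ici 0))
    (hq : ∀ t ∈ Ici (0 : ℝ), 0 ≤ q t) (hq_int : IntegrableOn q (Ioi 0)) {L : ℝ}
    (hL : Tendsto B' atTop (𝓝 L)) : ∫ s in Ioi 0, q s ≤ L := by
  refine le_of_tendsto_of_tendsto (intervalIntegral_tendsto_integral_Ioi 0 hq_int tendsto_id) hL ?_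
  filter_upwards [eventually_ge_atTop 0] with t ht
  rw [id, ← h.integral_mul_eq_deriv hqc ht]
  refine integral_mono_on ht ((hqc.mono Icc_subset_Ici_self).intervalIntegrable_of_Icc ht)
    (((hqc.mul h.continuousOn).mono Icc_subset_Ici_self).intervalIntegrable_of_Icc ht)
    fun s hs => ?_
  simpa using mul_le_mul_of_nonneg_left (h.one_le hq hs.1) (hq s hs.1)

end IsIVPSolution

theorem stmt5_general (B B' k : ℝ → ℝ)
    (hkc : ContinuousOn k (Set.Ici 0))
    (hB : ∀ t ∈ Set.Ici (0:ℝ), HasDerivWithinAt B (B' t) (Set.Ici 0) t)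
    (hB' : ∀ t ∈ Set.Ici (0:ℝ), HasDerivWithinAt B' (k t ^ 2 * B t) (Set.Ici 0) t)
    (hB0 : B 0 = 1) (hB'0 : B' 0 = 0)
    (hint1 : MeasureTheory.IntegrableOn (fun s => s * k s ^ 2) (Set.Ici 0))
    (hint2 : MeasureTheory.IntegrableOn (fun s => k s ^ 2) (Set.Ici 0))
    (hpos : 0 < ∫ s in Set.Ici (0:ℝ), k s ^ 2) :
    Tendsto (fun t => t * (B' t / B t)) atTop (nhds 1) := by
  have h : IsIVPSolution (fun s => k s ^ 2) B B' := ⟨hB, hB', hB0, hB'0⟩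
  have hqc : ContinuousOn (fun s => k s ^ 2) (Ici 0) := hkc.pow 2
  have hq : ∀ t ∈ Ici (0 : ℝ), 0 ≤ k t ^ 2 := fun t _ => sq_nonneg (k t)
  have hq_int := hint2.mono_set Ioi_subset_Ici_self
  obtain ⟨L, hL⟩ := h.exists_tendsto_deriv hqc hq hq_int (hint1.mono_set Ioi_subset_Ici_self)
  have hL_pos : 0 < L := by
    rw [integral_Ici_eq_integral_Ioi] at hpos
    exact hpos.trans_le (h.integral_le_of_tendsto_deriv hqc hq hq_int hL)
  have hB_div : Tendsto (fun t => B t / t) atTop (𝓝 L) :=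
    tendsto_div_self_of_tendsto_deriv ((eventually_gt_atTop 0).mono fun t ht => h.hasDerivAt ht) hL
  have hlim := hL.div hB_div hL_pos.ne'
  rw [div_self hL_pos.ne'] at hlim
  refine hlim.congr' ?_
  filter_upwards [eventually_gt_atTop 0] with t ht
  have hBt : B t ≠ 0 := (zero_lt_one.trans_le (h.one_le hq ht.le)).ne'
  simp only [Pi.div_apply]
  field_simp

theorem stmt5 (B B' k : ℝ → ℝ)
    (hkc : ContinuousOn k (Set.Ici 0))
    (hknn : ∀ t ∈ Set.Ici (0:ℝ), 0 ≤ k t)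
    (hB : ∀ t ∈ Set.Ici (0:ℝ), HasDerivWithinAt B (B' t) (Set.Ici 0) t)
    (hB' : ∀ t ∈ Set.Ici (0:ℝ), HasDerivWithinAt B' (k t ^ 2 * B t) (Set.Ici 0) t)
    (hB0 : B 0 = 1) (hB'0 : B' 0 = 0)
    (hint1 : MeasureTheory.IntegrableOn (fun s => s * k s ^ 2) (Set.Ici 0))
    (hint2 : MeasureTheory.IntegrableOn (fun s => k s ^ 2) (Set.Ici 0))
    (hpos : 0 < ∫ s in Set.Ici (0:ℝ), k s ^ 2)
    (havg : Tendsto (fun t => t⁻¹ * ∫ s in (0:ℝ)..t, B s * k s ^ 2 * s) atTop (nhds 0)) :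
    Tendsto (fun t => t * (B' t / B t)) atTop (nhds 1) :=
  stmt5_general B B' k hkc hB hB' hB0 hB'0 hint1 hint2 hpos
end

section
/- Let a₁₂, a₂₁, a₁₁, a₂₂, R₁, R₂ : [t₀, t₁] → ℝ be continuous with a₁₂ ≤ 0, a₂₁ ≤ 0, R₁ < 0, R₂ > 0 on (t₀, t₁], and let u, v : [t₀, t₁] → ℝ be C¹ solutions of u' = a₁₁u + a₁₂v + R₁ and v' = a₂₁u + a₂₂v + R₂ with u(t₀) ≤ 0 and v(t₀) ≥ 0. Then u(t) < 0 and v(t) > 0 for all t ∈ (t₀, t₁]. -/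
/-!
Write `p = u` and `q = -v`. The system for `(p, q)` is cooperative (its off-diagonal coefficients
`-a₁₂`, `-a₂₁` are nonnegative) with nonpositive sources, so `p' ≤ K (p + max q 0)` wherever
`p > 0`, and symmetrically for `q`, with `K` a bound for the coefficients. Grönwall's inequality
for `max p 0 ^ 2 + max q 0 ^ 2`, which vanishes at `t₀`, then gives the weak signs `u ≤ 0 ≤ v`.
Strictness is a first-order argument: if `u t = 0` for some `t > t₀`, then `u` is maximal
at `t` on `[t₀, t]`, so `u' t ≥ 0`; but `u' t = a₁₂ v + R₁ < 0` there.
-/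

open Set Filter Topology Asymptotics

theorem hasDerivAt_max_zero_sq (y : ℝ) :
    HasDerivAt (fun x => max x 0 ^ 2) (2 * max y 0) y := by
  rcases lt_trichotomy y 0 with hy | rfl | hy
  · have hzero : (fun x : ℝ => max x 0 ^ 2) =ᶠ[𝓝 y] fun _ => 0 := by
      filter_upwards [Iio_mem_nhds hy] with x (hx : x < 0)
      simp [max_eq_right hx.le]
    rw [max_eq_right hy.le, mul_zero]
    exact (hasDerivAt_const y 0).congr_of_eventuallyEq hzero
  · rw [max_self, mul_zero, hasDerivAt_iff_isLittleO_nhds_zero]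
    have hle : (fun h : ℝ => max h 0 ^ 2) =O[𝓝 0] fun h => h ^ 2 :=
      IsBigO.of_bound' (Eventually.of_forall fun h => by
        rw [norm_pow, norm_pow]
        exact pow_le_pow_left₀ (norm_nonneg _) (by simp [abs_le, le_abs_self]) 2)
    simpa using hle.trans_isLittleO (isLittleO_pow_id one_lt_two)
  · have hsq : (fun x : ℝ => max x 0 ^ 2) =ᶠ[𝓝 y] fun x => x ^ 2 := by
      filter_upwards [Ioi_mem_nhds hy] with x (hx : 0 < x)
      rw [max_eq_left hx.le]
    rw [max_eq_left hy.le]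
    simpa using (hasDerivAt_pow 2 y).congr_of_eventuallyEq hsq

theorem HasDerivWithinAt.nonneg_of_isMaxOn_Icc {f : ℝ → ℝ} {f' a b : ℝ} (hab : a < b)
    (hf : HasDerivWithinAt f f' (Icc a b) b) (hmax : IsMaxOn f (Icc a b) b) : 0 ≤ f' := by
  have hdir : a - b ∈ posTangentConeAt (Icc a b) b :=
    sub_mem_posTangentConeAt_of_segment_subset (by rw [segment_eq_uIcc, uIcc_of_ge hab.le])
  have h := hmax.localize.hasFDerivWithinAt_nonpos hf.hasFDerivWithinAt hdir
  simp only [ContinuousLinearMap.toSpanSingleton_apply, smul_eq_mul] at h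
  nlinarith

theorem neg_of_nonpos_of_hasDerivWithinAt {w : ℝ → ℝ} {d a b : ℝ} (hab : a < b)
    (hw : ∀ x ∈ Icc a b, w x ≤ 0) (hd : HasDerivWithinAt w d (Icc a b) b)
    (hneg : w b = 0 → d < 0) : w b < 0 := by
  refine (hw b (right_mem_Icc.2 hab.le)).lt_of_ne fun hzero => ?_
  have hmax : IsMaxOn w (Icc a b) b := fun x hx => by simpa [hzero] using hw x hx
  exact (hneg hzero).not_ge (hd.nonneg_of_isMaxOn_Icc hab hmax)

theorem max_zero_mul_le_of_pos_imp {p p' Q K : ℝ} (hQ : 0 ≤ Q)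
    (h : 0 < p → p' ≤ K * (p + Q)) : max p 0 * p' ≤ |K| * (max p 0 * (max p 0 + Q)) := by
  rcases le_or_gt p 0 with hp | hp
  · simp [max_eq_right hp]
  · rw [max_eq_left hp.le]
    calc p * p' ≤ p * (K * (p + Q)) := mul_le_mul_of_nonneg_left (h hp) hp.le
      _ ≤ p * (|K| * (p + Q)) := by gcongr; exact le_abs_self K
      _ = |K| * (p * (p + Q)) := by ring

theorem nonpos_of_deriv_right_le_of_pos {p q p' q' : ℝ → ℝ} {a b K : ℝ}
    (hpc : ContinuousOn p (Icc a b)) (hqc : ContinuousOn q (Icc a b))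
    (hp : ∀ x ∈ Ico a b, HasDerivWithinAt p (p' x) (Ici x) x)
    (hq : ∀ x ∈ Ico a b, HasDerivWithinAt q (q' x) (Ici x) x)
    (hp' : ∀ x ∈ Ico a b, 0 < p x → p' x ≤ K * (p x + max (q x) 0))
    (hq' : ∀ x ∈ Ico a b, 0 < q x → q' x ≤ K * (q x + max (p x) 0))
    (hpa : p a ≤ 0) (hqa : q a ≤ 0) : ∀ x ∈ Icc a b, p x ≤ 0 ∧ q x ≤ 0 := by
  set N : ℝ → ℝ := fun x => max (p x) 0 ^ 2 + max (q x) 0 ^ 2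
  have hNc : ContinuousOn N (Icc a b) :=
    ((hpc.sup continuousOn_const).pow 2).add ((hqc.sup continuousOn_const).pow 2)
  have hN : ∀ x ∈ Ico a b, HasDerivWithinAt N
      (2 * max (p x) 0 * p' x + 2 * max (q x) 0 * q' x) (Ici x) x := fun x hx =>
    ((hasDerivAt_max_zero_sq (p x)).comp_hasDerivWithinAt x (hp x hx)).add
      ((hasDerivAt_max_zero_sq (q x)).comp_hasDerivWithinAt x (hq x hx))
  have hbound : ∀ x ∈ Ico a b,
      2 * max (p x) 0 * p' x + 2 * max (q x) 0 * q' x ≤ 4 * |K| * N x + 0 := by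
    intro x hx
    have h₁ := max_zero_mul_le_of_pos_imp (le_max_right (q x) 0) (hp' x hx)
    have h₂ := max_zero_mul_le_of_pos_imp (le_max_right (p x) 0) (hq' x hx)
    nlinarith [sq_nonneg (max (p x) 0 - max (q x) 0), abs_nonneg K]
  have hNa : N a ≤ 0 := by simp [N, max_eq_right hpa, max_eq_right hqa]
  intro x hx
  have hNx := le_gronwallBound_of_liminf_deriv_right_le hNc
    (fun x hx _ hr => (hN x hx).liminf_right_slope_le hr) hNa hbound x hx
  rw [gronwallBound_ε0_δ0] at hNx
  constructor <;> nlinarith [le_max_left (p x) 0, le_max_left (q x) 0,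
    sq_nonneg (max (p x) 0), sq_nonneg (max (q x) 0)]

theorem cooperative_rhs_le {c d p q s K : ℝ} (hp : 0 < p) (hc : |c| ≤ K) (hd : 0 ≤ d)
    (hdK : d ≤ K) (hs : s ≤ 0) : c * p + d * q + s ≤ K * (p + max q 0) := by
  have hcp : c * p ≤ K * p := mul_le_mul_of_nonneg_right ((le_abs_self c).trans hc) hp.le
  have hdq : d * q ≤ K * max q 0 :=
    (mul_le_mul_of_nonneg_left (le_max_left q 0) hd).trans
      (mul_le_mul_of_nonneg_right hdK (le_max_right q 0))
  linarith

theorem HasDerivWithinAt.Ici_of_Icc {f : ℝ → ℝ} {f' a b x : ℝ}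
    (hf : HasDerivWithinAt f f' (Icc a b) x) (hx : x ∈ Ico a b) :
    HasDerivWithinAt f f' (Ici x) x :=
  hf.mono_of_mem_nhdsWithin (mem_of_superset (Icc_mem_nhdsGE hx.2) (Icc_subset_Icc_left hx.1))

section LinearSystem

variable {a b K : ℝ} {a₁₁ a₁₂ a₂₁ a₂₂ R₁ R₂ u v : ℝ → ℝ}

theorem linear_system_weak_signs
    (hK : ∀ x ∈ Icc a b, |a₁₁ x| ≤ K ∧ -a₁₂ x ≤ K ∧ -a₂₁ x ≤ K ∧ |a₂₂ x| ≤ K)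
    (ha₁₂ : ∀ x ∈ Icc a b, a₁₂ x ≤ 0) (ha₂₁ : ∀ x ∈ Icc a b, a₂₁ x ≤ 0)
    (hR₁ : ∀ x ∈ Ioo a b, R₁ x ≤ 0) (hR₂ : ∀ x ∈ Ioo a b, 0 ≤ R₂ x)
    (hu : ∀ x ∈ Icc a b, HasDerivWithinAt u (a₁₁ x * u x + a₁₂ x * v x + R₁ x) (Icc a b) x)
    (hv : ∀ x ∈ Icc a b, HasDerivWithinAt v (a₂₁ x * u x + a₂₂ x * v x + R₂ x) (Icc a b) x)
    (hua : u a ≤ 0) (hva : 0 ≤ v a) : ∀ x ∈ Icc a b, u x ≤ 0 ∧ 0 ≤ v x := by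
  -- The sources only matter where `u > 0` or `v < 0`, which the initial signs exclude at `a`.
  have hIoo_of_pos : ∀ x ∈ Ico a b, 0 < u x ∨ 0 < -v x → x ∈ Ioo a b := by
    rintro x ⟨hax, hxb⟩ hx0
    refine ⟨hax.lt_of_ne ?_, hxb⟩
    rintro rfl
    rcases hx0 with h | h <;> linarith
  have hweak := nonpos_of_deriv_right_le_of_pos (K := K) (q := fun x => -v x)
    (fun x hx => (hu x hx).continuousWithinAt) (fun x hx => (hv x hx).neg.continuousWithinAt)
    (fun x hx => (hu x (Ico_subset_Icc_self hx)).Ici_of_Icc hx)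
    (fun x hx => (hv x (Ico_subset_Icc_self hx)).neg.Ici_of_Icc hx)
    (fun x hx hx0 => by
      have hxI := Ico_subset_Icc_self hx
      obtain ⟨h₁₁, h₁₂, -, -⟩ := hK x hxI
      linear_combination cooperative_rhs_le (q := -v x) hx0 h₁₁ (neg_nonneg.2 (ha₁₂ x hxI)) h₁₂
        (hR₁ x (hIoo_of_pos x hx (.inl hx0))))
    (fun x hx hx0 => by
      have hxI := Ico_subset_Icc_self hx
      obtain ⟨-, -, h₂₁, h₂₂⟩ := hK x hxI
      linear_combination cooperative_rhs_le (q := u x) hx0 h₂₂ (neg_nonneg.2 (ha₂₁ x hxI)) h₂₁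
        (neg_nonpos.2 (hR₂ x (hIoo_of_pos x hx (.inr hx0)))))
    hua (neg_nonpos.2 hva)
  exact fun x hx => ⟨(hweak x hx).1, neg_nonpos.1 (hweak x hx).2⟩

theorem linear_system_strict_signs (hab : a < b) (hsigns : ∀ x ∈ Icc a b, u x ≤ 0 ∧ 0 ≤ v x)
    (ha₁₂ : a₁₂ b ≤ 0) (ha₂₁ : a₂₁ b ≤ 0) (hR₁ : R₁ b < 0) (hR₂ : 0 < R₂ b)
    (hu : HasDerivWithinAt u (a₁₁ b * u b + a₁₂ b * v b + R₁ b) (Icc a b) b)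
    (hv : HasDerivWithinAt v (a₂₁ b * u b + a₂₂ b * v b + R₂ b) (Icc a b) b) :
    u b < 0 ∧ 0 < v b := by
  have hbI : b ∈ Icc a b := right_mem_Icc.2 hab.le
  constructor
  · refine neg_of_nonpos_of_hasDerivWithinAt hab (fun x hx => (hsigns x hx).1) hu fun hzero => ?_
    have hv_term : a₁₂ b * v b ≤ 0 := mul_nonpos_of_nonpos_of_nonneg ha₁₂ (hsigns b hbI).2
    rw [hzero, mul_zero]
    linarith
  · refine neg_lt_zero.1 (neg_of_nonpos_of_hasDerivWithinAt (w := -v) hab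
      (fun x hx => neg_nonpos.2 (hsigns x hx).2) hv.neg fun hzero => ?_)
    have hu_term : 0 ≤ a₂₁ b * u b := mul_nonneg_of_nonpos_of_nonpos ha₂₁ (hsigns b hbI).1
    rw [neg_eq_zero.1 hzero, mul_zero]
    linarith

end LinearSystem

theorem stmt10_general (t₀ t₁ : ℝ)
    (a₁₁ a₁₂ a₂₁ a₂₂ R₁ R₂ u v : ℝ → ℝ)
    (hc : ∀ f ∈ [a₁₁, a₁₂, a₂₁, a₂₂, R₁, R₂], ContinuousOn f (Set.Icc t₀ t₁))
    (ha12 : ∀ t ∈ Set.Icc t₀ t₁, a₁₂ t ≤ 0)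
    (ha21 : ∀ t ∈ Set.Icc t₀ t₁, a₂₁ t ≤ 0)
    (hR1 : ∀ t ∈ Set.Ioc t₀ t₁, R₁ t < 0)
    (hR2 : ∀ t ∈ Set.Ioc t₀ t₁, R₂ t > 0)
    (hu : ∀ t ∈ Set.Icc t₀ t₁, HasDerivWithinAt u (a₁₁ t * u t + a₁₂ t * v t + R₁ t) (Set.Icc t₀ t₁) t)
    (hv : ∀ t ∈ Set.Icc t₀ t₁, HasDerivWithinAt v (a₂₁ t * u t + a₂₂ t * v t + R₂ t) (Set.Icc t₀ t₁) t)
    (hu0 : u t₀ ≤ 0) (hv0 : v t₀ ≥ 0) :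
    ∀ t ∈ Set.Ioc t₀ t₁, u t < 0 ∧ v t > 0 := by
  intro t ht
  obtain ⟨K, hK⟩ := isCompact_Icc.exists_bound_of_continuousOn
    (f := fun x => |a₁₁ x| + |a₁₂ x| + |a₂₁ x| + |a₂₂ x|)
    ((((hc a₁₁ (by simp)).abs.add (hc a₁₂ (by simp)).abs).add (hc a₂₁ (by simp)).abs).add
      (hc a₂₂ (by simp)).abs)
  have hbound : ∀ x ∈ Icc t₀ t₁, |a₁₁ x| ≤ K ∧ -a₁₂ x ≤ K ∧ -a₂₁ x ≤ K ∧ |a₂₂ x| ≤ K := by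
    intro x hx
    have h := (le_abs_self _).trans (hK x hx)
    refine ⟨?_, ?_, ?_, ?_⟩ <;> linarith [abs_nonneg (a₁₁ x), abs_nonneg (a₁₂ x),
      abs_nonneg (a₂₁ x), abs_nonneg (a₂₂ x), neg_le_abs (a₁₂ x), neg_le_abs (a₂₁ x)]
  have hweak := linear_system_weak_signs hbound ha12 ha21
    (fun x hx => (hR1 x (Ioo_subset_Ioc_self hx)).le)
    (fun x hx => (hR2 x (Ioo_subset_Ioc_self hx)).le) hu hv hu0 hv0
  have hsub : Icc t₀ t ⊆ Icc t₀ t₁ := Icc_subset_Icc_right ht.2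
  have htI : t ∈ Icc t₀ t₁ := hsub (right_mem_Icc.2 ht.1.le)
  exact linear_system_strict_signs ht.1 (fun x hx => hweak x (hsub hx)) (ha12 t htI) (ha21 t htI)
    (hR1 t ht) (hR2 t ht) ((hu t htI).mono hsub) ((hv t htI).mono hsub)

theorem stmt10 (t₀ t₁ : ℝ) (ht : t₀ ≤ t₁)
    (a₁₁ a₁₂ a₂₁ a₂₂ R₁ R₂ u v u' v' : ℝ → ℝ)
    (hc : ∀ f ∈ [a₁₁, a₁₂, a₂₁, a₂₂, R₁, R₂], ContinuousOn f (Set.Icc t₀ t₁))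
    (ha12 : ∀ t ∈ Set.Icc t₀ t₁, a₁₂ t ≤ 0)
    (ha21 : ∀ t ∈ Set.Icc t₀ t₁, a₂₁ t ≤ 0)
    (hR1 : ∀ t ∈ Set.Ioc t₀ t₁, R₁ t < 0)
    (hR2 : ∀ t ∈ Set.Ioc t₀ t₁, R₂ t > 0)
    (hu : ∀ t ∈ Set.Icc t₀ t₁, HasDerivWithinAt u (a₁₁ t * u t + a₁₂ t * v t + R₁ t) (Set.Icc t₀ t₁) t)
    (hv : ∀ t ∈ Set.Icc t₀ t₁, HasDerivWithinAt v (a₂₁ t * u t + a₂₂ t * v t + R₂ t) (Set.Icc t₀ t₁) t)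
    (hu0 : u t₀ ≤ 0) (hv0 : v t₀ ≥ 0) :
    ∀ t ∈ Set.Ioc t₀ t₁, u t < 0 ∧ v t > 0 :=
  stmt10_general t₀ t₁ a₁₁ a₁₂ a₂₁ a₂₂ R₁ R₂ u v hc ha12 ha21 hR1 hR2 hu hv hu0 hv0
end
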